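/- Let (X, 𝒜, μ) be a measure space and T : X → X a measurable bijection with measurable inverse such that both T and T^{−1} preserve μ. Let U ⊆ X, and fix integers M ≥ 0 and k ≥ 0. For each integer m ≥ M + 1 let Y_m ⊆ U be a measurable set such that every z ∈ Y_m satisfies: the number of integers i with 1 ≤ i ≤ m − M and T^{−i}(z) ∈ U is exactly k. Then μ(⋃_{m ≥ M+1} Y_m) ≤ μ(⋃_{m ≥ M+1} T^{−m}(Y_m)). -/

import Mathlib

/-!
A point `x` lying in both `T^{-m}(Y_m)` and `T^{-n}(Y_n)`, `m < n`, gives `z = Tⁿ x ∈ Y_n` whose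
backward orbit visits `Y_m ⊆ U` at time `n - m`. The backward returns of `T^{-(n-m)} z` up to time
`m - M`, shifted by `n - m`, together with the time `n - m` itself, are returns of `z` up to time
`n - M`; so `z` makes more than `k` returns, a contradiction. Hence the sets `T^{-m}(Y_m)` are
pairwise disjoint, and since `T` preserves `μ`, countable subadditivity on the left and
additivity on the right give the inequality.
-/

open MeasureTheory

section

variable {α : Type*}

def returnTimes (f : α → α) (U : Set α) (N : ℕ) (z : α) : Set ℕ :=
  {i | 1 ≤ i ∧ i ≤ N ∧ f^[i] z ∈ U}

lemma finite_returnTimes (f : α → α) (U : Set α) (N : ℕ) (z : α) :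
    (returnTimes f U N z).Finite :=
  (Set.finite_Iic N).subset fun _ hi => hi.2.1

lemma ncard_returnTimes_iterate_lt {f : α → α} {U : Set α} {z : α} {d : ℕ} (hd : 0 < d)
    (hdU : f^[d] z ∈ U) (N : ℕ) :
    (returnTimes f U N (f^[d] z)).ncard < (returnTimes f U (N + d) z).ncard := by
  have hshift : (· + d) '' returnTimes f U N (f^[d] z) ⊂ returnTimes f U (N + d) z := by
    refine Set.ssubset_iff_of_subset ?_ |>.mpr ⟨d, ⟨hd, by omega, hdU⟩, ?_⟩
    · rintro _ ⟨i, ⟨hi1, hiN, hiU⟩, rfl⟩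
      beta_reduce
      exact ⟨by omega, by omega, by rwa [Function.iterate_add_apply]⟩
    · rintro ⟨i, ⟨hi1, -⟩, hid : i + d = d⟩
      omega
  calc (returnTimes f U N (f^[d] z)).ncard
      = ((· + d) '' returnTimes f U N (f^[d] z)).ncard :=
        (Set.ncard_image_of_injective _ (add_left_injective d)).symm
    _ < _ := Set.ncard_lt_ncard hshift (finite_returnTimes f U (N + d) z)

lemma iterate_sub_notMem_of_ncard_returnTimes_eq {f : α → α} {U : Set α} {M k : ℕ}
    {Y : ℕ → Set α} (hYU : ∀ m, M + 1 ≤ m → Y m ⊆ U)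
    (hret : ∀ m, M + 1 ≤ m → ∀ z ∈ Y m, (returnTimes f U (m - M) z).ncard = k)
    {m n : ℕ} (hm : M + 1 ≤ m) (hmn : m < n) {z : α} (hz : z ∈ Y n) :
    f^[n - m] z ∉ Y m := by
  intro hzm
  have hlt := ncard_returnTimes_iterate_lt (N := m - M) (by omega : 0 < n - m) (hYU m hm hzm)
  rw [show m - M + (n - m) = n - M by omega, hret m hm _ hzm, hret n (by omega) z hz] at hlt
  exact hlt.false

lemma Equiv.disjoint_preimage_iterate (T : α ≃ α) {A B : Set α} {m n : ℕ} (hmn : m ≤ n)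
    (h : ∀ z ∈ B, (⇑T.symm)^[n - m] z ∉ A) :
    Disjoint ((⇑T)^[m] ⁻¹' A) ((⇑T)^[n] ⁻¹' B) := by
  refine Set.disjoint_left.mpr fun x hxA hxB => h _ hxB ?_
  obtain ⟨d, rfl⟩ := Nat.exists_eq_add_of_le hmn
  rwa [Nat.add_sub_cancel_left, add_comm, Function.iterate_add_apply,
    Function.LeftInverse.iterate T.symm_apply_apply]

lemma Equiv.image_symm_iterate (T : α ≃ α) (m : ℕ) (A : Set α) :
    (⇑T.symm)^[m] '' A = (⇑T)^[m] ⁻¹' A :=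
  congrFun (Set.image_eq_preimage_of_inverse (Function.LeftInverse.iterate T.apply_symm_apply m)
    (Function.LeftInverse.iterate T.symm_apply_apply m)) A

lemma MeasureTheory.MeasurePreserving.measure_biUnion_le_measure_biUnion_preimage_iterate
    [MeasurableSpace α] {μ : Measure α} {T : α → α} (hT : MeasurePreserving T μ μ)
    {s : Set ℕ} {Y : ℕ → Set α} (hY : ∀ m ∈ s, MeasurableSet (Y m))
    (hdisj : s.PairwiseDisjoint fun m => T^[m] ⁻¹' Y m) :
    μ (⋃ m ∈ s, Y m) ≤ μ (⋃ m ∈ s, T^[m] ⁻¹' Y m) :=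
  calc μ (⋃ m ∈ s, Y m)
      ≤ ∑' m : s, μ (Y m) := measure_biUnion_le μ s.to_countable Y
    _ = ∑' m : s, μ (T^[m] ⁻¹' Y m) :=
        tsum_congr fun m => ((hT.iterate m).measure_preimage (hY m m.2).nullMeasurableSet).symm
    _ = μ (⋃ m ∈ s, T^[m] ⁻¹' Y m) :=
        (measure_biUnion s.to_countable hdisj fun m hm => hT.measurable.iterate m (hY m hm)).symm

end

theorem measure_iUnion_le_measure_iUnion_preimages_general
    {X : Type*} [MeasurableSpace X] (μ : Measure X) (T : X ≃ X)
    (hμT : MeasurePreserving T μ μ)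
    (U : Set X) (M k : ℕ) (Y : ℕ → Set X)
    (hYmeas : ∀ m, M + 1 ≤ m → MeasurableSet (Y m))
    (hYU : ∀ m, M + 1 ≤ m → Y m ⊆ U)
    (hret : ∀ m, M + 1 ≤ m → ∀ z ∈ Y m,
      {i : ℕ | 1 ≤ i ∧ i ≤ m - M ∧ (⇑T.symm)^[i] z ∈ U}.ncard = k) :
    μ (⋃ (m : ℕ) (_ : M + 1 ≤ m), Y m) ≤
      μ (⋃ (m : ℕ) (_ : M + 1 ≤ m), (⇑T.symm)^[m] '' Y m) := by
  have hdisj : {m | M + 1 ≤ m}.PairwiseDisjoint fun m => (⇑T)^[m] ⁻¹' Y m := by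
    have hlt : ∀ m n, M + 1 ≤ m → m < n →
        Disjoint ((⇑T)^[m] ⁻¹' Y m) ((⇑T)^[n] ⁻¹' Y n) := fun m n hm hmn =>
      T.disjoint_preimage_iterate hmn.le fun _ =>
        iterate_sub_notMem_of_ncard_returnTimes_eq hYU hret hm hmn
    intro m hm n hn hne
    rcases hne.lt_or_gt with hmn | hnm
    · exact hlt m n hm hmn
    · exact (hlt n m hn hnm).symm
  simp only [T.image_symm_iterate]
  exact hμT.measure_biUnion_le_measure_biUnion_preimage_iterate hYmeas hdisj

/-- Measure estimate for the sets `Y^k_m`: if both `T` and `T⁻¹` preserve `μ` and every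
point of `Y_m` makes exactly `k` returns to `U` at the backward times `1, …, m − M`,
then `μ(⋃_{m ≥ M+1} Y_m) ≤ μ(⋃_{m ≥ M+1} T^{-m}(Y_m))`. -/
theorem measure_iUnion_le_measure_iUnion_preimages
    {X : Type*} [MeasurableSpace X] (μ : Measure X) (T : X ≃ X)
    (hT : Measurable T) (hT' : Measurable T.symm)
    (hμT : MeasurePreserving T μ μ) (hμT' : MeasurePreserving T.symm μ μ)
    (U : Set X) (M k : ℕ) (Y : ℕ → Set X)
    (hYmeas : ∀ m, M + 1 ≤ m → MeasurableSet (Y m))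
    (hYU : ∀ m, M + 1 ≤ m → Y m ⊆ U)
    (hret : ∀ m, M + 1 ≤ m → ∀ z ∈ Y m,
      {i : ℕ | 1 ≤ i ∧ i ≤ m - M ∧ (⇑T.symm)^[i] z ∈ U}.ncard = k) :
    μ (⋃ (m : ℕ) (_ : M + 1 ≤ m), Y m) ≤
      μ (⋃ (m : ℕ) (_ : M + 1 ≤ m), (⇑T.symm)^[m] '' Y m) :=
  measure_iUnion_le_measure_iUnion_preimages_general μ T hμT U M k Y hYmeas hYU hret
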